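/- arXiv:2406.19350 — 5 statements merged into one kernel-verified Lean document; each statement's English description precedes it below -/
import Mathlib

section
/- Let n ≥ 1 and let U : ℝⁿ → ℝⁿ be a continuous vector field such that for every m ∈ ℝⁿ and each index i: Uᵢ(m) > 0 whenever mᵢ < 1, Uᵢ(m) < 0 whenever mᵢ > 1, and Uᵢ(m) = 0 whenever mᵢ = 1. Then every bounded global solution m : [0,∞) → ℝⁿ of m'(t) = U(m(t)) converges as t → ∞ to the all-ones vector (1, 1, …, 1). -/
/-!
Each coordinate is handled separately, since `mᵢ'` has the sign of `1 - mᵢ`. The trajectory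
stays in a compact set, on which the continuous `Uᵢ` is bounded away from `0` on `{xᵢ ≤ b}`
for every `b < 1`. So `mᵢ` cannot stay below `b` forever (it would grow linearly), and once it
reaches `b` it stays above `b`, because the field points upward there. Reflecting `x ↦ -x`
gives the bound from above.
-/

open Set Filter

theorem le_of_hasDerivAt_of_pos_at_level {f φ : ℝ → ℝ} {t₀ b : ℝ}
    (hf : ∀ t, t₀ ≤ t → HasDerivAt f (φ t) t) (hb : ∀ t, t₀ ≤ t → f t = b → 0 < φ t)
    (h₀ : b ≤ f t₀) {t : ℝ} (ht : t₀ ≤ t) : b ≤ f t :=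
  image_le_of_deriv_right_lt_deriv_boundary' (f := fun _ => b) (f' := fun _ => 0)
    continuousOn_const (fun _ _ => hasDerivWithinAt_const _ _ _) h₀
    (fun x hx => (hf x hx.1).continuousAt.continuousWithinAt)
    (fun x hx => (hf x hx.1).hasDerivWithinAt) (fun x hx hbx => hb x hx.1 hbx.symm)
    ⟨ht, le_rfl⟩

theorem add_mul_le_of_hasDerivAt_of_le {f φ : ℝ → ℝ} {δ : ℝ}
    (hf : ∀ t, 0 ≤ t → HasDerivAt f (φ t) t) (hδ : ∀ t, 0 ≤ t → δ ≤ φ t) {t : ℝ} (ht : 0 ≤ t) :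
    f 0 + δ * t ≤ f t :=
  image_le_of_deriv_right_le_deriv_boundary (f := fun s => f 0 + δ * s) (f' := fun _ => δ)
    (by fun_prop)
    (fun x _ => by simpa using (((hasDerivAt_id x).const_mul δ).const_add (f 0)).hasDerivWithinAt)
    (by simp) (fun x hx => (hf x hx.1).continuousAt.continuousWithinAt)
    (fun x hx => (hf x hx.1).hasDerivWithinAt) (fun x hx => hδ x hx.1) ⟨ht, le_rfl⟩

theorem not_bddAbove_of_hasDerivAt_of_pos_le {f φ : ℝ → ℝ} {δ : ℝ} (hδ₀ : 0 < δ)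
    (hf : ∀ t, 0 ≤ t → HasDerivAt f (φ t) t) (hδ : ∀ t, 0 ≤ t → δ ≤ φ t) :
    ¬ BddAbove (f '' Ici 0) := by
  rintro ⟨B, hB⟩
  have hf₀ : f 0 ≤ B := hB (mem_image_of_mem f self_mem_Ici)
  set T := (B - f 0 + 1) / δ
  have hT : 0 ≤ T := div_nonneg (by linarith) hδ₀.le
  have hgrow : f 0 + δ * T ≤ f T := add_mul_le_of_hasDerivAt_of_le hf hδ hT
  rw [mul_div_cancel₀ _ hδ₀.ne'] at hgrow
  linarith [hB (mem_image_of_mem f hT)]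

theorem eventually_lt_of_hasDerivAt {f φ : ℝ → ℝ} {a : ℝ}
    (hf : ∀ t, 0 ≤ t → HasDerivAt f (φ t) t) (hbdd : BddAbove (f '' Ici 0))
    (hφ : ∀ c < a, ∃ δ > 0, ∀ t, 0 ≤ t → f t ≤ c → δ ≤ φ t) {c : ℝ} (hc : c < a) :
    ∀ᶠ t in atTop, c < f t := by
  obtain ⟨b, hcb, hba⟩ := exists_between hc
  obtain ⟨δ, hδ₀, hδ⟩ := hφ b hba
  obtain ⟨t₀, ht₀, hbt₀⟩ : ∃ t₀, 0 ≤ t₀ ∧ b ≤ f t₀ := by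
    by_contra! hlt
    exact not_bddAbove_of_hasDerivAt_of_pos_le hδ₀ hf (fun t ht => hδ t ht (hlt t ht).le) hbdd
  filter_upwards [eventually_ge_atTop t₀] with t ht
  have hbarrier := le_of_hasDerivAt_of_pos_at_level (fun s hs => hf s (ht₀.trans hs))
    (fun s hs hfs => hδ₀.trans_le (hδ s (ht₀.trans hs) hfs.le)) hbt₀ ht
  exact hcb.trans_le hbarrier

theorem Bornology.IsBounded.exists_pos_le {E : Type*} [PseudoMetricSpace E] [ProperSpace E]
    {S F : Set E} (hS : Bornology.IsBounded S) (hF : IsClosed F) {g : E → ℝ} (hg : Continuous g)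
    (hpos : ∀ x ∈ F, 0 < g x) : ∃ δ > 0, ∀ x ∈ S, x ∈ F → δ ≤ g x := by
  obtain ⟨δ, hδ₀, hδ⟩ := (hS.isCompact_closure.inter_right hF).exists_forall_le'
    hg.continuousOn fun x hx => hpos x hx.2
  exact ⟨δ, hδ₀, fun x hxS hxF => hδ x ⟨subset_closure hxS, hxF⟩⟩

theorem eventually_lt_comp_of_hasDerivAt {E : Type*} [PseudoMetricSpace E] [ProperSpace E]
    {m : ℝ → E} {p q : E → ℝ} {a : ℝ} (hp : Continuous p) (hq : Continuous q)
    (hpq : ∀ x, p x < a → 0 < q x) (hm : ∀ t, 0 ≤ t → HasDerivAt (p ∘ m) (q (m t)) t)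
    (hbdd : Bornology.IsBounded (m '' Ici 0)) {c : ℝ} (hc : c < a) :
    ∀ᶠ t in atTop, c < p (m t) := by
  refine eventually_lt_of_hasDerivAt hm ?_ (fun c' hc' => ?_) hc
  · simpa only [image_comp] using
      (hbdd.isCompact_closure.image hp).isBounded.bddAbove.mono (image_mono subset_closure)
  · obtain ⟨δ, hδ₀, hδ⟩ := hbdd.exists_pos_le (isClosed_le hp continuous_const) hq
      fun x hx => hpq x (hx.trans_lt hc')
    exact ⟨δ, hδ₀, fun t ht hpt => hδ (m t) (mem_image_of_mem m ht) hpt⟩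

theorem first_price_dynamics_converge_general
    (n : ℕ)
    (U : (Fin n → ℝ) → (Fin n → ℝ))
    (hU : Continuous U)
    (hpos : ∀ (m : Fin n → ℝ) (i : Fin n), m i < 1 → 0 < U m i)
    (hneg : ∀ (m : Fin n → ℝ) (i : Fin n), 1 < m i → U m i < 0)
    (m : ℝ → (Fin n → ℝ))
    (hm : ∀ t : ℝ, 0 ≤ t → HasDerivAt m (U (m t)) t)
    (hbdd : Bornology.IsBounded (m '' Set.Ici (0 : ℝ))) :
    Filter.Tendsto m Filter.atTop (nhds (fun _ => (1 : ℝ))) := by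
  refine tendsto_pi_nhds.2 fun i => tendsto_order.2 ⟨fun c hc => ?_, fun c hc => ?_⟩
  · exact eventually_lt_comp_of_hasDerivAt (continuous_apply i) ((continuous_apply i).comp hU)
      (fun x => hpos x i) (fun t ht => hasDerivAt_pi.1 (hm t ht) i) hbdd hc
  · have hreflected := eventually_lt_comp_of_hasDerivAt (p := fun x => -x i)
      (q := fun x => -U x i) (by fun_prop) (by fun_prop)
      (fun x hx => neg_pos.2 (hneg x i (by linarith)))
      (fun t ht => (hasDerivAt_pi.1 (hm t ht) i).neg) hbdd (neg_lt_neg hc)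
    exact hreflected.mono fun t ht => neg_lt_neg_iff.1 ht

/-- First-price auction dynamics: if `U` is a continuous vector field on ℝⁿ
with `Uᵢ(m) > 0` for `mᵢ < 1`, `Uᵢ(m) < 0` for `mᵢ > 1` and `Uᵢ(m) = 0` for
`mᵢ = 1`, then every bounded global solution of `m' = U m` converges to the
all-ones vector. -/
theorem first_price_dynamics_converge
    (n : ℕ) (hn : 1 ≤ n)
    (U : (Fin n → ℝ) → (Fin n → ℝ))
    (hU : Continuous U)
    (hpos : ∀ (m : Fin n → ℝ) (i : Fin n), m i < 1 → 0 < U m i)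
    (hneg : ∀ (m : Fin n → ℝ) (i : Fin n), 1 < m i → U m i < 0)
    (hzero : ∀ (m : Fin n → ℝ) (i : Fin n), m i = 1 → U m i = 0)
    (m : ℝ → (Fin n → ℝ))
    (hm : ∀ t : ℝ, 0 ≤ t → HasDerivAt m (U (m t)) t)
    (hbdd : Bornology.IsBounded (m '' Set.Ici (0 : ℝ))) :
    Filter.Tendsto m Filter.atTop (nhds (fun _ => (1 : ℝ))) :=
  first_price_dynamics_converge_general n U hU hpos hneg m hm hbdd
end

section
/- For any n × n real matrix A, there exist m ∈ ℕ, an m × m purely competitive real matrix B, and an injective linear map T : ℝⁿ → ℝᵐ (equivalently, an m × n real matrix T of full column rank n) such that T·A = B·T. -/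
namespace PCIntertwine

open Matrix Finset

noncomputable def pos (x : ℝ) : ℝ := max x 0
noncomputable def neg (x : ℝ) : ℝ := max (-x) 0

lemma pos_nonneg (x : ℝ) : 0 ≤ pos x := le_max_right _ _
lemma neg_nonneg (x : ℝ) : 0 ≤ neg x := le_max_right _ _
lemma pos_sub_neg (x : ℝ) : pos x - neg x = x := by
  unfold pos neg
  rcases le_total x 0 with h | h
  · rw [max_eq_right h, max_eq_left (by linarith)]; ring
  · rw [max_eq_left h, max_eq_right (by linarith)]; ring

/-- Row vectors: `e_k`, `-e_k`, `u = (1,…,1)`, `-u`. -/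
noncomputable def Tm (n : ℕ) :
    Matrix ((Fin n ⊕ Fin n) ⊕ (Unit ⊕ Unit)) (Fin n) ℝ :=
  Matrix.of fun i c => match i with
  | .inl (.inl k) => if c = k then 1 else 0
  | .inl (.inr k) => if c = k then -1 else 0
  | .inr (.inl _) => 1
  | .inr (.inr _) => -1

noncomputable def Bm (n : ℕ) (A : Matrix (Fin n) (Fin n) ℝ) :
    Matrix ((Fin n ⊕ Fin n) ⊕ (Unit ⊕ Unit))
      ((Fin n ⊕ Fin n) ⊕ (Unit ⊕ Unit)) ℝ :=
  Matrix.of fun i j' => match i, j' with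
  | .inl (.inl k), .inl (.inl j) => if j = k then 0 else -(neg (A k j))
  | .inl (.inl k), .inl (.inr j) =>
      if j = k then -(pos (A k k)) else -(pos (A k j) + neg (A k k))
  | .inl (.inl k), .inr (.inl _) => -(neg (A k k))
  | .inl (.inl _), .inr (.inr _) => 0
  | .inl (.inr k), .inl (.inl j) =>
      if j = k then -(pos (A k k)) else -(pos (A k j) + neg (A k k))
  | .inl (.inr k), .inl (.inr j) => if j = k then 0 else -(neg (A k j))
  | .inl (.inr _), .inr (.inl _) => 0
  | .inl (.inr k), .inr (.inr _) => -(neg (A k k))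
  | .inr (.inl _), .inl (.inl j) => -(neg (∑ k, A k j))
  | .inr (.inl _), .inl (.inr j) => -(pos (∑ k, A k j))
  | .inr (.inl _), .inr _ => 0
  | .inr (.inr _), .inl (.inl j) => -(pos (∑ k, A k j))
  | .inr (.inr _), .inl (.inr j) => -(neg (∑ k, A k j))
  | .inr (.inr _), .inr _ => 0

lemma Bm_nonpos (n : ℕ) (A : Matrix (Fin n) (Fin n) ℝ) (i j) :
    Bm n A i j ≤ 0 := by
  obtain (k | k) | (⟨⟩ | ⟨⟩) := i <;> obtain (l | l) | (⟨⟩ | ⟨⟩) := j <;>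
    simp only [Bm, Matrix.of_apply] <;> (try split) <;>
    first
    | exact le_refl 0
    | exact neg_nonpos.mpr (neg_nonneg _)
    | exact neg_nonpos.mpr (pos_nonneg _)
    | exact neg_nonpos.mpr (add_nonneg (pos_nonneg _) (neg_nonneg _))

lemma Bm_diag (n : ℕ) (A : Matrix (Fin n) (Fin n) ℝ) (i) :
    Bm n A i i = 0 := by
  obtain (k | k) | (⟨⟩ | ⟨⟩) := i <;> simp [Bm]

lemma Tm_inj (n : ℕ) : Function.Injective (Tm n).mulVecLin := by
  intro x y h
  funext k
  have := congrFun h (Sum.inl (Sum.inl k))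
  simpa [Tm, Matrix.mulVecLin_apply, Matrix.mulVec, dotProduct,
    ite_mul, Finset.sum_ite_eq] using this

lemma key (n : ℕ) (A : Matrix (Fin n) (Fin n) ℝ) :
    Tm n * A = Bm n A * Tm n := by
  ext i c
  rw [Matrix.mul_apply, Matrix.mul_apply]
  obtain (k | k) | (⟨⟩ | ⟨⟩) := i
  · by_cases h : c = k
    · subst h
      simp [Tm, Bm, Fintype.sum_sum_type, ite_mul, mul_ite,
        Finset.sum_ite_eq', Finset.sum_ite_eq]
      linarith [pos_sub_neg (A c c)]
    · simp [Tm, Bm, Fintype.sum_sum_type, ite_mul, mul_ite,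
        Finset.sum_ite_eq', Finset.sum_ite_eq, h]
      linarith [pos_sub_neg (A k c)]
  · by_cases h : c = k
    · subst h
      simp [Tm, Bm, Fintype.sum_sum_type, ite_mul, mul_ite,
        Finset.sum_ite_eq', Finset.sum_ite_eq]
      linarith [pos_sub_neg (A c c)]
    · simp [Tm, Bm, Fintype.sum_sum_type, ite_mul, mul_ite,
        Finset.sum_ite_eq', Finset.sum_ite_eq, h]
      linarith [pos_sub_neg (A k c)]
  · simp [Tm, Bm, Fintype.sum_sum_type, ite_mul, mul_ite,
      Finset.sum_ite_eq', Finset.sum_ite_eq]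
    linarith [pos_sub_neg (∑ x, A x c)]
  · simp [Tm, Bm, Fintype.sum_sum_type, ite_mul, mul_ite,
      Finset.sum_ite_eq', Finset.sum_ite_eq]
    linarith [pos_sub_neg (∑ x, A x c)]

end PCIntertwine

/-- For any `n × n` real matrix `A` there is a purely competitive matrix `B`
(i.e. `Bᵢⱼ ≤ 0` for `i ≠ j` and `Bᵢᵢ = 0`) of some size `m` and an injective
linear map `T : ℝⁿ → ℝᵐ` (given by a matrix) such that `T·A = B·T`. -/
theorem exists_purely_competitive_intertwining
    (n : ℕ) (A : Matrix (Fin n) (Fin n) ℝ) :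
    ∃ (m : ℕ) (B : Matrix (Fin m) (Fin m) ℝ) (T : Matrix (Fin m) (Fin n) ℝ),
      (∀ i j : Fin m, i ≠ j → B i j ≤ 0) ∧
      (∀ i : Fin m, B i i = 0) ∧
      Function.Injective T.mulVecLin ∧
      T * A = B * T := by
  classical
  set ι := (Fin n ⊕ Fin n) ⊕ (Unit ⊕ Unit) with hι
  let e : ι ≃ Fin (Fintype.card ι) := Fintype.equivFin ι
  refine ⟨Fintype.card ι, (PCIntertwine.Bm n A).submatrix e.symm e.symm,
    (PCIntertwine.Tm n).submatrix e.symm _root_.id, ?_, ?_, ?_, ?_⟩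
  · intro i j _; exact PCIntertwine.Bm_nonpos n A _ _
  · intro i; exact PCIntertwine.Bm_diag n A _
  · intro x y h
    apply PCIntertwine.Tm_inj n
    funext i
    have := congrFun h (e i)
    simpa [Matrix.mulVecLin_apply, Matrix.mulVec, dotProduct,
      Matrix.submatrix_apply] using this
  · have h1 : (PCIntertwine.Tm n).submatrix e.symm _root_.id * A
        = (PCIntertwine.Tm n * A).submatrix e.symm _root_.id := by
      ext i c
      simp [Matrix.mul_apply, Matrix.submatrix_apply]
    have h2 : (PCIntertwine.Bm n A).submatrix e.symm e.symm *
        ((PCIntertwine.Tm n).submatrix e.symm _root_.id)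
        = (PCIntertwine.Bm n A * PCIntertwine.Tm n).submatrix e.symm _root_.id := by
      have := Matrix.submatrix_mul_equiv (PCIntertwine.Bm n A) (PCIntertwine.Tm n)
        e.symm e.symm _root_.id
      set_option linter.unnecessarySimpa false in
      exact by simpa using this
    rw [h1, h2, PCIntertwine.key]
end

section
/- For every n × n real matrix A there exist m ∈ ℕ, an m × m purely competitive real matrix B, and an injective linear map T : ℝⁿ → ℝᵐ such that for every differentiable function x : ℝ → ℝⁿ satisfying x'(t) = A·x(t) for all t, the function y(t) := T(x(t)) satisfies y'(t) = B·y(t) for all t. In other words, every solution of a linear dynamical system can be simulated by a purely competitive linear dynamical system via a linear (in particular affine) map. -/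
/-!
Split each coordinate `xᵢ` into four copies `±xᵢ`, two with each sign. A term `a xⱼ` of
`(A x)ᵢ` is then produced, in any copy of row `i`, by the coefficient `-|a|` on a copy of
`xⱼ` whose sign is opposite to that of `a`; having two copies of each sign, one can always
pick a copy other than the row itself, so the diagonal stays zero.
-/

open Matrix

namespace Matrix

def IsPurelyCompetitive {κ : Type*} (B : Matrix κ κ ℝ) : Prop :=
  (∀ i j, i ≠ j → B i j ≤ 0) ∧ ∀ i, B i i = 0

theorem IsPurelyCompetitive.submatrix {κ κ' : Type*} {B : Matrix κ κ ℝ}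
    (hB : B.IsPurelyCompetitive) (e : κ' ≃ κ) : (B.submatrix e e).IsPurelyCompetitive :=
  ⟨fun _ _ hij => hB.1 _ _ (e.injective.ne hij), fun _ => hB.2 _⟩

end Matrix

section Simulation

variable {ι κ : Type*} [Fintype ι] [Fintype κ]

theorem hasDerivAt_comp_of_mulVec_comm {A : Matrix ι ι ℝ} {B : Matrix κ κ ℝ}
    {T : (ι → ℝ) →ₗ[ℝ] (κ → ℝ)} (hT : ∀ v, B *ᵥ T v = T (A *ᵥ v))
    {x : ℝ → ι → ℝ} {t : ℝ} (hx : HasDerivAt x (A *ᵥ x t) t) :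
    HasDerivAt (fun s => T (x s)) (B *ᵥ T (x t)) t := by
  rw [hT]
  exact (LinearMap.toContinuousLinearMap T).hasFDerivAt.comp_hasDerivAt t hx

theorem exists_fin_of_mulVec_comm {A : Matrix ι ι ℝ} {B : Matrix κ κ ℝ}
    {T : (ι → ℝ) →ₗ[ℝ] (κ → ℝ)} (hB : B.IsPurelyCompetitive) (hTinj : Function.Injective T)
    (hT : ∀ v, B *ᵥ T v = T (A *ᵥ v)) :
    ∃ (m : ℕ) (B' : Matrix (Fin m) (Fin m) ℝ) (T' : (ι → ℝ) →ₗ[ℝ] (Fin m → ℝ)),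
      B'.IsPurelyCompetitive ∧ Function.Injective T' ∧ ∀ v, B' *ᵥ T' v = T' (A *ᵥ v) := by
  let e := (Fintype.equivFin κ).symm
  refine ⟨_, B.submatrix e e, LinearMap.funLeft ℝ ℝ e ∘ₗ T, hB.submatrix e,
    (LinearMap.funLeft_injective_of_surjective ℝ ℝ _ e.surjective).comp hTinj, fun v => ?_⟩
  change B.submatrix e e *ᵥ (T v ∘ e) = T (A *ᵥ v) ∘ e
  rw [submatrix_mulVec_equiv, Function.comp_assoc, e.self_comp_symm, Function.comp_id, hT]

end Simulation

noncomputable section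

namespace PurelyCompetitive

variable {ι : Type*}

/-- Copy `(s, b)` carries the sign `-1` if `s` and `+1` otherwise; `b` tells apart the two
copies of the same sign. -/
def copySign (c : Bool × Bool) : ℝ := if c.1 then -1 else 1

def partnerCopy (a : ℝ) (c : Bool × Bool) : Bool × Bool := (decide (0 ≤ a), !c.2)

theorem partnerCopy_ne (a : ℝ) (c : Bool × Bool) : partnerCopy a c ≠ c := fun h => by
  simpa [partnerCopy] using congrArg Prod.snd h

theorem neg_abs_mul_copySign_partnerCopy (a : ℝ) (c : Bool × Bool) :
    -|a| * copySign (partnerCopy a c) = a := by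
  rcases le_or_gt 0 a with ha | ha
  · simp [partnerCopy, copySign, ha, abs_of_nonneg ha]
  · simp [partnerCopy, copySign, ha.not_ge, abs_of_neg ha]

variable (ι) in
def signedCopies : (ι → ℝ) →ₗ[ℝ] ((Bool × Bool) × ι → ℝ) :=
  LinearMap.pi fun p => copySign p.1 • LinearMap.proj p.2

theorem signedCopies_apply (x : ι → ℝ) (p : (Bool × Bool) × ι) :
    signedCopies ι x p = copySign p.1 * x p.2 :=
  rfl

theorem signedCopies_injective : Function.Injective (signedCopies ι) := fun x y hxy =>
  funext fun i => by simpa [signedCopies_apply, copySign] using congrFun hxy ((false, false), i)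

def competitiveLift (A : Matrix ι ι ℝ) : Matrix ((Bool × Bool) × ι) ((Bool × Bool) × ι) ℝ :=
  of fun p q => if q.1 = partnerCopy (copySign p.1 * A p.2 q.2) p.1
    then -|copySign p.1 * A p.2 q.2| else 0

theorem competitiveLift_isPurelyCompetitive (A : Matrix ι ι ℝ) :
    (competitiveLift A).IsPurelyCompetitive := by
  refine ⟨fun p q _ => ?_, fun p => if_neg (partnerCopy_ne _ _).symm⟩
  rw [competitiveLift, of_apply]
  split_ifs <;> simp only [neg_nonpos, abs_nonneg, le_refl]

theorem sum_competitiveLift_mul_copySign (A : Matrix ι ι ℝ) (c : Bool × Bool) (i j : ι) :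
    ∑ d, competitiveLift A (c, i) (d, j) * copySign d = copySign c * A i j := by
  simp only [competitiveLift, of_apply, ite_mul, zero_mul]
  rw [Fintype.sum_ite_eq', neg_abs_mul_copySign_partnerCopy]

variable [Fintype ι]

theorem competitiveLift_mulVec_signedCopies (A : Matrix ι ι ℝ) (v : ι → ℝ) :
    competitiveLift A *ᵥ signedCopies ι v = signedCopies ι (A *ᵥ v) := by
  ext ⟨c, i⟩
  simp only [mulVec, dotProduct, signedCopies_apply, Finset.mul_sum]
  rw [Fintype.sum_prod_type_right]
  refine Finset.sum_congr rfl fun j _ => ?_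
  rw [← mul_assoc, ← sum_competitiveLift_mul_copySign A c i j, Finset.sum_mul]
  exact Finset.sum_congr rfl fun d _ => by ring

end PurelyCompetitive

end

open PurelyCompetitive in
/-- Every linear dynamical system `x' = A·x` can be simulated by a purely
competitive linear system `y' = B·y` via an injective linear map `T`:
if `x` solves `x' = A·x` then `y := T ∘ x` solves `y' = B·y`. -/
theorem linear_system_simulated_by_purely_competitive
    (n : ℕ) (A : Matrix (Fin n) (Fin n) ℝ) :
    ∃ (m : ℕ) (B : Matrix (Fin m) (Fin m) ℝ)
      (T : (Fin n → ℝ) →ₗ[ℝ] (Fin m → ℝ)),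
      (∀ i j : Fin m, i ≠ j → B i j ≤ 0) ∧
      (∀ i : Fin m, B i i = 0) ∧
      Function.Injective T ∧
      ∀ x : ℝ → (Fin n → ℝ),
        (∀ t : ℝ, HasDerivAt x (A.mulVec (x t)) t) →
        ∀ t : ℝ, HasDerivAt (fun s => T (x s)) (B.mulVec (T (x t))) t := by
  obtain ⟨m, B, T, ⟨hoff, hdiag⟩, hTinj, hT⟩ :=
    exists_fin_of_mulVec_comm (competitiveLift_isPurelyCompetitive A) signedCopies_injective
      (competitiveLift_mulVec_signedCopies A)
  exact ⟨m, B, T, hoff, hdiag, hTinj, fun x hx t => hasDerivAt_comp_of_mulVec_comm hT (hx t)⟩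
end

section
/- For every complex number λ and every integer d ≥ 1, there exist n ≥ 1 and an n × n real matrix M with all entries nonnegative such that, setting N := (complexification of M) − λ·I as an n × n complex matrix, one has rank(N^{d−1}) + rank(N^{d+1}) > 2·rank(N^{d}). (Equivalently, the Jordan normal form of M over ℂ contains a Jordan block with eigenvalue λ of size exactly d.) -/
open Matrix Kronecker

namespace JordanBlockAux

def shift (R : Type*) [Zero R] [One R] (d : ℕ) : Matrix (Fin d) (Fin d) R :=
  Matrix.of fun i j => if (j : ℕ) = (i : ℕ) + 1 then 1 else 0

def Jmat (d : ℕ) (μ : ℂ) : Matrix (Fin d) (Fin d) ℂ :=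
  μ • (1 : Matrix (Fin d) (Fin d) ℂ) + shift ℂ d

lemma shift_pow (d k : ℕ) :
    (shift ℂ d) ^ k = Matrix.of (fun i j : Fin d => if (j : ℕ) = (i : ℕ) + k then (1:ℂ) else 0) := by
  induction k with
  | zero =>
    ext i j
    simp [Matrix.one_apply, Fin.ext_iff, eq_comm]
  | succ k ih =>
    rw [pow_succ, ih]
    ext i j
    rw [Matrix.mul_apply]
    simp only [Matrix.of_apply]
    by_cases h : (i : ℕ) + k < d
    · have : ∀ t : Fin d, ((if (t : ℕ) = (i : ℕ) + k then (1:ℂ) else 0) *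
          (shift ℂ d t j)) = if t = ⟨(i:ℕ)+k, h⟩ then shift ℂ d ⟨(i:ℕ)+k, h⟩ j else 0 := by
        intro t
        by_cases ht : t = ⟨(i:ℕ)+k, h⟩
        · subst ht; simp
        · have : ¬ ((t:ℕ) = (i:ℕ) + k) := fun hh => ht (Fin.ext hh)
          simp [this, ht]
      simp_rw [this]
      rw [Finset.sum_ite_eq' Finset.univ]
      simp only [Finset.mem_univ, if_true, shift, Matrix.of_apply]
      congr 1
    · have h1 : ∀ t : Fin d, ((if (t : ℕ) = (i : ℕ) + k then (1:ℂ) else 0) *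
          (shift ℂ d t j)) = 0 := by
        intro t
        have : ¬ ((t:ℕ) = (i:ℕ) + k) := by omega
        simp [this]
      rw [Finset.sum_congr rfl (fun t _ => h1 t), Finset.sum_const_zero]
      have : ¬ ((j:ℕ) = (i:ℕ) + (k+1)) := by omega
      simp [this]

lemma shift_pow_self (d : ℕ) : (shift ℂ d) ^ d = 0 := by
  rw [shift_pow]
  ext i j
  have : ¬ ((j:ℕ) = (i:ℕ) + d) := by omega
  simp [this]

lemma shift_pow_pred (d : ℕ) (hd : 1 ≤ d) :
    (shift ℂ d) ^ (d - 1) =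
      Matrix.single (⟨0, hd⟩ : Fin d) (⟨d - 1, by omega⟩ : Fin d) 1 := by
  rw [shift_pow]
  ext i j
  simp only [Matrix.of_apply, Matrix.single, Fin.ext_iff]
  by_cases h : (j : ℕ) = (i : ℕ) + (d - 1)
  · have hi : (i : ℕ) = 0 := by omega
    have hj : (j : ℕ) = d - 1 := by omega
    simp [h, hi, hj]
  · have h2 : ¬ ((0:ℕ) = (i:ℕ) ∧ ((d-1:ℕ) = (j:ℕ))) := by omega
    simp [h, h2]

lemma Jmat_zero (d : ℕ) : Jmat d 0 = shift ℂ d := by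
  simp [Jmat]

lemma Jmat_blockTriangular (d : ℕ) (μ : ℂ) : (Jmat d μ).BlockTriangular id := by
  intro i j hlt
  simp only [id_eq] at hlt
  have h1 : ¬ (i = j) := by intro h; subst h; exact lt_irrefl _ hlt
  have h2 : ¬ ((j:ℕ) = (i:ℕ) + 1) := by
    have : (j : ℕ) < (i : ℕ) := hlt
    omega
  simp [Jmat, shift, Matrix.one_apply, h1, h2]

lemma det_Jmat (d : ℕ) (μ : ℂ) : (Jmat d μ).det = μ ^ d := by
  rw [Matrix.det_of_upperTriangular (Jmat_blockTriangular d μ)]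
  have : ∀ i : Fin d, Jmat d μ i i = μ := by
    intro i
    simp [Jmat, shift, Matrix.one_apply]
  simp [this]

lemma isUnit_det_Jmat_pow (d k : ℕ) (μ : ℂ) (hμ : μ ≠ 0) :
    IsUnit ((Jmat d μ ^ k).det) := by
  rw [Matrix.det_pow, det_Jmat]
  exact (isUnit_iff_ne_zero.mpr (pow_ne_zero _ (pow_ne_zero _ hμ)))

lemma rank_eq_of_conj {p : Type*} [Fintype p] [DecidableEq p]
    (A B W : Matrix p p ℂ) (hW : IsUnit W.det) (h : A * W = W * B) :
    A.rank = B.rank := by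
  have hA : A = W * B * W⁻¹ := by
    rw [← h, Matrix.mul_nonsing_inv_cancel_right _ _ hW]
  have hB : B = W⁻¹ * (A * W) := by
    rw [h, ← Matrix.mul_assoc, Matrix.nonsing_inv_mul _ hW, Matrix.one_mul]
  refine le_antisymm ?_ ?_
  · calc A.rank = (W * B * W⁻¹).rank := by rw [← hA]
      _ ≤ (W * B).rank := Matrix.rank_mul_le_left _ _
      _ ≤ B.rank := Matrix.rank_mul_le_right _ _
  · calc B.rank = (W⁻¹ * (A * W)).rank := by rw [← hB]
      _ ≤ (A * W).rank := Matrix.rank_mul_le_right _ _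
      _ ≤ A.rank := Matrix.rank_mul_le_left _ _

theorem core (lam : ℂ) (d : ℕ) (hd : 1 ≤ d) (m : ℕ) (hm : 1 ≤ m)
    (C : Matrix (Fin m) (Fin m) ℝ) (hC : ∀ i j, 0 ≤ C i j)
    (U : Matrix (Fin m) (Fin m) ℂ) (hU : IsUnit U.det)
    (ε : Fin m → ℂ) (heig : C.map Complex.ofReal * U = U * Matrix.diagonal ε)
    (l₀ : Fin m) (hl₀ : ε l₀ = lam) (hne : ∀ l, l ≠ l₀ → ε l ≠ lam) :
    ∃ (n : ℕ) (_ : 1 ≤ n) (M : Matrix (Fin n) (Fin n) ℝ),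
      (∀ i j, 0 ≤ M i j) ∧
      (let N : Matrix (Fin n) (Fin n) ℂ :=
        M.map (Complex.ofReal) - lam • (1 : Matrix (Fin n) (Fin n) ℂ)
      2 * (N ^ d).rank < (N ^ (d - 1)).rank + (N ^ (d + 1)).rank) := by
  classical
  set M₀ : Matrix (Fin d × Fin m) (Fin d × Fin m) ℝ :=
    (1 : Matrix (Fin d) (Fin d) ℝ) ⊗ₖ C + shift ℝ d ⊗ₖ (1 : Matrix (Fin m) (Fin m) ℝ) with hM₀def
  set e : Fin d × Fin m ≃ Fin (d * m) := finProdFinEquiv with hedef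
  have hn : 1 ≤ d * m := Nat.one_le_iff_ne_zero.mpr (by positivity)
  refine ⟨d * m, hn, Matrix.reindex e e M₀, ?_, ?_⟩
  · intro i j
    rw [Matrix.reindex_apply, Matrix.submatrix_apply]
    apply add_nonneg
    · refine mul_nonneg ?_ (hC _ _)
      rw [Matrix.one_apply]
      split <;> norm_num
    · refine mul_nonneg ?_ ?_
      · simp only [shift, Matrix.of_apply]
        split <;> norm_num
      · rw [Matrix.one_apply]
        split <;> norm_num
  · dsimp only
    set Cc : Matrix (Fin m) (Fin m) ℂ := C.map Complex.ofReal with hCc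
    set N₀ : Matrix (Fin d × Fin m) (Fin d × Fin m) ℂ :=
      M₀.map Complex.ofReal - lam • 1 with hN₀def
    have hmap : M₀.map Complex.ofReal =
        (1 : Matrix (Fin d) (Fin d) ℂ) ⊗ₖ Cc + shift ℂ d ⊗ₖ (1 : Matrix (Fin m) (Fin m) ℂ) := by
      ext a b
      simp only [hM₀def, Matrix.map_apply, Matrix.add_apply, Matrix.kroneckerMap_apply,
        Matrix.one_apply, shift, Matrix.of_apply, hCc, Complex.ofReal_add, Complex.ofReal_mul,
        apply_ite Complex.ofReal, Complex.ofReal_one, Complex.ofReal_zero]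
    -- the matrix N as in the statement equals the reindexing of N₀
    have hNre : (Matrix.reindex e e M₀).map Complex.ofReal -
        lam • (1 : Matrix (Fin (d * m)) (Fin (d * m)) ℂ) = Matrix.reindex e e N₀ := by
      ext i j
      simp [hN₀def, Matrix.reindex_apply, Matrix.submatrix_apply, Matrix.map_apply,
        Matrix.sub_apply, Matrix.smul_apply, Matrix.one_apply]
    rw [hNre]
    have hrankre : ∀ k : ℕ, ((Matrix.reindex e e N₀) ^ k).rank = (N₀ ^ k).rank := by
      intro k
      have hp : (Matrix.reindex e e N₀) ^ k = Matrix.reindex e e (N₀ ^ k) := by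
        have := map_pow (Matrix.reindexAlgEquiv ℂ ℂ e) N₀ k
        simpa [Matrix.reindexAlgEquiv_apply] using this.symm
      rw [hp, Matrix.rank_reindex]
    rw [hrankre, hrankre, hrankre]
    -- conjugation to block diagonal form
    set W : Matrix (Fin d × Fin m) (Fin d × Fin m) ℂ :=
      (1 : Matrix (Fin d) (Fin d) ℂ) ⊗ₖ U with hWdef
    have hdetW : IsUnit W.det := by
      rw [hWdef, Matrix.det_kronecker]
      simp only [Matrix.det_one, one_pow, one_mul, Fintype.card_fin]
      exact hU.pow d
    set G : Matrix (Fin d × Fin m) (Fin d × Fin m) ℂ :=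
      (1 : Matrix (Fin d) (Fin d) ℂ) ⊗ₖ (Matrix.diagonal ε - lam • 1) +
        shift ℂ d ⊗ₖ (1 : Matrix (Fin m) (Fin m) ℂ) with hGdef
    have kron_sub : ∀ (A : Matrix (Fin d) (Fin d) ℂ) (B B' : Matrix (Fin m) (Fin m) ℂ),
        A ⊗ₖ (B - B') = A ⊗ₖ B - A ⊗ₖ B' := by
      intro A B B'
      ext x y
      simp [Matrix.kroneckerMap_apply, Matrix.sub_apply, mul_sub]
    have hNW : N₀ * W = W * G := by
      rw [hN₀def, hmap, hWdef, hGdef]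
      simp only [Matrix.sub_mul, Matrix.add_mul, Matrix.mul_sub, Matrix.mul_add, kron_sub,
        Matrix.mul_kronecker_mul, Matrix.one_mul, Matrix.mul_one,
        Matrix.smul_mul, Matrix.mul_smul, Matrix.kronecker_smul]
      simp only [← Matrix.mul_kronecker_mul]
      rw [heig]
      simp only [Matrix.one_mul, Matrix.mul_one]
      abel
    have hpow : ∀ k : ℕ, N₀ ^ k * W = W * G ^ k := by
      intro k
      induction k with
      | zero => simp
      | succ k ih =>
        calc N₀ ^ (k+1) * W = N₀ ^ k * (N₀ * W) := by rw [pow_succ, Matrix.mul_assoc]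
          _ = N₀ ^ k * W * G := by rw [hNW, Matrix.mul_assoc]
          _ = W * G ^ k * G := by rw [ih]
          _ = W * G ^ (k+1) := by rw [pow_succ, Matrix.mul_assoc]
    have hrank : ∀ k : ℕ, (N₀ ^ k).rank = (G ^ k).rank := fun k =>
      rank_eq_of_conj _ _ _ hdetW (hpow k)
    rw [hrank, hrank, hrank]
    -- block diagonal description of G
    have hGblock : G = Matrix.blockDiagonal (fun l : Fin m => Jmat d (ε l - lam)) := by
      ext x y
      obtain ⟨i, li⟩ := x
      obtain ⟨j, lj⟩ := y
      simp only [hGdef, Matrix.add_apply, Matrix.kroneckerMap_apply, Matrix.blockDiagonal_apply,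
        Matrix.one_apply, Matrix.sub_apply, Matrix.diagonal_apply, Matrix.smul_apply,
        Jmat, shift, Matrix.of_apply, smul_eq_mul, mul_one, mul_zero]
      by_cases h1 : li = lj <;> by_cases h2 : i = j <;>
        simp [h1, h2, mul_comm] <;> ring
    have hGpow : ∀ k : ℕ, G ^ k =
        Matrix.blockDiagonal (fun l : Fin m => (Jmat d (ε l - lam)) ^ k) := by
      intro k
      rw [hGblock, ← Matrix.blockDiagonal_pow]
      rfl
    -- the idempotent-like diagonal comparison matrices
    set E : Matrix (Fin d × Fin m) (Fin d × Fin m) ℂ :=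
      Matrix.diagonal (fun x : Fin d × Fin m => if x.2 = l₀ then (0:ℂ) else 1) with hEdef
    have hEblock : Matrix.blockDiagonal
        (fun l : Fin m => if l = l₀ then (0 : Matrix (Fin d) (Fin d) ℂ) else 1) = E := by
      have h : (fun l : Fin m => if l = l₀ then (0 : Matrix (Fin d) (Fin d) ℂ) else 1) =
          fun l : Fin m => Matrix.diagonal (fun _ : Fin d => if l = l₀ then (0:ℂ) else 1) := by
        funext l
        split_ifs <;> simp
      rw [h, Matrix.blockDiagonal_diagonal]
    have hrankE : E.rank = d * (m - 1) := by
      rw [hEdef, Matrix.rank_diagonal]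
      have h1 : ∀ x : Fin d × Fin m, ((if x.2 = l₀ then (0:ℂ) else 1) ≠ 0) ↔ ¬ (x.2 = l₀) := by
        intro x
        split_ifs with h <;> simp [h]
      rw [Fintype.card_congr ((Equiv.subtypeEquivRight h1).trans
        { toFun := fun x => (x.1.1, ⟨x.1.2, x.2⟩),
          invFun := fun y => ⟨(y.1, y.2.1), y.2.2⟩,
          left_inv := fun x => rfl,
          right_inv := fun y => rfl :
            {x : Fin d × Fin m // ¬ (x.2 = l₀)} ≃ Fin d × {l : Fin m // ¬ (l = l₀)} })]
      rw [Fintype.card_prod, Fintype.card_fin, Fintype.card_subtype_compl,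
        Fintype.card_subtype_eq, Fintype.card_fin]
    -- eigenvalue at l₀ vanishes
    have hl₀' : ε l₀ - lam = 0 := by rw [hl₀, sub_self]
    -- upper bound for rank (G ^ d)
    have hub : (G ^ d).rank ≤ d * (m - 1) := by
      have hGE : G ^ d = G ^ d * E := by
        rw [hGpow, ← hEblock, ← Matrix.blockDiagonal_mul]
        refine congrArg Matrix.blockDiagonal (funext fun l => ?_)
        by_cases hl : l = l₀
        · subst hl
          rw [if_pos rfl, Matrix.mul_zero, hl₀', Jmat_zero, shift_pow_self]
        · rw [if_neg hl, Matrix.mul_one]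
      calc (G ^ d).rank = (G ^ d * E).rank := by rw [← hGE]
        _ ≤ E.rank := Matrix.rank_mul_le_right _ _
        _ = d * (m - 1) := hrankE
    -- generic lower bound
    have hlb : ∀ k : ℕ, d * (m - 1) ≤ (G ^ k).rank := by
      intro k
      set Z : Matrix (Fin d × Fin m) (Fin d × Fin m) ℂ :=
        Matrix.blockDiagonal (fun l : Fin m =>
          if l = l₀ then 0 else ((Jmat d (ε l - lam)) ^ k)⁻¹) with hZdef
      have hGZ : G ^ k * Z = E := by
        rw [hGpow, hZdef, ← Matrix.blockDiagonal_mul, ← hEblock]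
        refine congrArg Matrix.blockDiagonal (funext fun l => ?_)
        by_cases hl : l = l₀
        · subst hl
          rw [if_pos rfl, if_pos rfl, Matrix.mul_zero]
        · rw [if_neg hl, if_neg hl,
            Matrix.mul_nonsing_inv _ (isUnit_det_Jmat_pow d k _ (sub_ne_zero.mpr (hne l hl)))]
      calc d * (m - 1) = E.rank := hrankE.symm
        _ = (G ^ k * Z).rank := by rw [hGZ]
        _ ≤ (G ^ k).rank := Matrix.rank_mul_le_left _ _
    -- refined lower bound for the (d-1)-st power
    set i0 : Fin d := ⟨0, hd⟩ with hi0
    set i1 : Fin d := ⟨d - 1, by omega⟩ with hi1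
    set E' : Matrix (Fin d × Fin m) (Fin d × Fin m) ℂ :=
      Matrix.diagonal (fun x : Fin d × Fin m =>
        if x.2 = l₀ then (if x.1 = i0 then (1:ℂ) else 0) else 1) with hE'def
    have hB0 : Matrix.single i0 i0 (1:ℂ) =
        Matrix.diagonal (fun i : Fin d => if i = i0 then (1:ℂ) else 0) := by
      ext a b
      simp only [Matrix.single, Matrix.diagonal_apply, Matrix.of_apply]
      by_cases h1 : a = b <;> by_cases h2 : a = i0 <;> simp [h1, h2, eq_comm] <;> tauto
    have hE'block : Matrix.blockDiagonal (fun l : Fin m =>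
        if l = l₀ then Matrix.single i0 i0 (1:ℂ) else 1) = E' := by
      have h : (fun l : Fin m => if l = l₀ then Matrix.single i0 i0 (1:ℂ) else 1) =
          fun l : Fin m => Matrix.diagonal
            (fun i : Fin d => if l = l₀ then (if i = i0 then (1:ℂ) else 0) else 1) := by
        funext l
        split_ifs with h
        · rw [hB0]
        · simp
      rw [h, Matrix.blockDiagonal_diagonal]
    have hrankE' : E'.rank = d * m - (d - 1) := by
      rw [hE'def, Matrix.rank_diagonal]
      have key : Fintype.card {x : Fin d × Fin m //
          ¬ ((if x.2 = l₀ then (if x.1 = i0 then (1:ℂ) else 0) else 1) ≠ 0)} = d - 1 := by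
        have h1 : ∀ x : Fin d × Fin m,
            (¬ ((if x.2 = l₀ then (if x.1 = i0 then (1:ℂ) else 0) else 1) ≠ 0)) ↔
              (x.2 = l₀ ∧ ¬ (x.1 = i0)) := by
          intro x
          by_cases h2 : x.2 = l₀ <;> by_cases h3 : x.1 = i0 <;> simp [h2, h3]
        rw [Fintype.card_congr ((Equiv.subtypeEquivRight h1).trans
          { toFun := fun x => ⟨x.1.1, x.2.2⟩,
            invFun := fun i => ⟨(i.1, l₀), ⟨rfl, i.2⟩⟩,
            left_inv := fun x => Subtype.ext (Prod.ext rfl x.2.1.symm),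
            right_inv := fun i => rfl :
              {x : Fin d × Fin m // x.2 = l₀ ∧ ¬ (x.1 = i0)} ≃ {i : Fin d // ¬ (i = i0)} })]
        rw [Fintype.card_subtype_compl, Fintype.card_subtype_eq, Fintype.card_fin]
      have := Fintype.card_subtype_compl
        (fun x : Fin d × Fin m => (if x.2 = l₀ then (if x.1 = i0 then (1:ℂ) else 0) else 1) ≠ 0)
      rw [key, Fintype.card_prod, Fintype.card_fin, Fintype.card_fin] at this
      have hle := Fintype.card_subtype_le
        (fun x : Fin d × Fin m => (if x.2 = l₀ then (if x.1 = i0 then (1:ℂ) else 0) else 1) ≠ 0)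
      rw [Fintype.card_prod, Fintype.card_fin, Fintype.card_fin] at hle
      omega
    have hlb' : d * m - (d - 1) ≤ (G ^ (d - 1)).rank := by
      set Z' : Matrix (Fin d × Fin m) (Fin d × Fin m) ℂ :=
        Matrix.blockDiagonal (fun l : Fin m =>
          if l = l₀ then Matrix.single i1 i0 (1:ℂ)
          else ((Jmat d (ε l - lam)) ^ (d - 1))⁻¹) with hZ'def
      have hGZ' : G ^ (d - 1) * Z' = E' := by
        rw [hGpow, hZ'def, ← Matrix.blockDiagonal_mul, ← hE'block]
        refine congrArg Matrix.blockDiagonal (funext fun l => ?_)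
        by_cases hl : l = l₀
        · subst hl
          rw [if_pos rfl, if_pos rfl, hl₀', Jmat_zero, shift_pow_pred d hd,
            Matrix.single_mul_single_same, one_mul]
        · rw [if_neg hl, if_neg hl,
            Matrix.mul_nonsing_inv _ (isUnit_det_Jmat_pow d (d-1) _
              (sub_ne_zero.mpr (hne l hl)))]
      calc d * m - (d - 1) = E'.rank := hrankE'.symm
        _ = (G ^ (d - 1) * Z').rank := by rw [hGZ']
        _ ≤ (G ^ (d - 1)).rank := Matrix.rank_mul_le_left _ _
    -- conclude by arithmetic
    obtain ⟨m', rfl⟩ : ∃ m', m = m' + 1 := ⟨m - 1, by omega⟩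
    have e1 : d * (m' + 1 - 1) = d * m' := by norm_num
    have e2 : d * (m' + 1) = d * m' + d := by ring
    have h1 := hub
    have h2 := hlb (d + 1)
    have h3 := hlb'
    rw [e1] at h1 h2
    rw [e2] at h3
    have hfin : d * m' + d - (d - 1) = d * m' + 1 := by omega
    rw [hfin] at h3
    omega

end JordanBlockAux


/-- For every `λ ∈ ℂ` and every `d ≥ 1` there is a nonnegative real square
matrix `M` whose complexification has a Jordan block of eigenvalue `λ` and
size exactly `d`, certified by the rank inequality
`rank(N^{d−1}) + rank(N^{d+1}) > 2·rank(N^d)` where `N = M_ℂ − λ·I`. -/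
theorem exists_nonneg_matrix_with_jordan_block
    (lam : ℂ) (d : ℕ) (hd : 1 ≤ d) :
    ∃ (n : ℕ) (_ : 1 ≤ n) (M : Matrix (Fin n) (Fin n) ℝ),
      (∀ i j, 0 ≤ M i j) ∧
      (let N : Matrix (Fin n) (Fin n) ℂ :=
        M.map (Complex.ofReal) - lam • (1 : Matrix (Fin n) (Fin n) ℂ)
      2 * (N ^ d).rank < (N ^ (d - 1)).rank + (N ^ (d + 1)).rank) := by

  by_cases him : lam.im = 0
  · by_cases hre : 0 ≤ lam.re
    · -- nonnegative real eigenvalue : 1×1 matrix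
      have hlam : ((lam.re : ℝ) : ℂ) = lam := Complex.ext rfl (by simp [him])
      refine JordanBlockAux.core lam d hd 1 le_rfl
        (Matrix.of fun _ _ => lam.re) (fun i j => hre)
        1 (by simp) (fun _ => lam) ?_ 0 rfl (fun l hl => absurd (Subsingleton.elim l 0) hl)
      rw [Matrix.mul_one, Matrix.one_mul]
      ext i j
      have : i = j := Subsingleton.elim i j
      subst this
      simp [Matrix.map_apply, Matrix.diagonal_apply, hlam]
    · -- negative real eigenvalue : 2×2 antidiagonal matrix
      push_neg at hre
      have hlam : ((-lam.re : ℝ) : ℂ) = -lam := by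
        apply Complex.ext <;> simp [him]
      refine JordanBlockAux.core lam d hd 2 (by norm_num)
        !![0, -lam.re; -lam.re, 0] ?_
        !![1, 1; 1, -1] ?_ ![-lam, lam] ?_ 1 rfl ?_
      · intro i j
        fin_cases i <;> fin_cases j <;> simp <;> linarith
      · rw [Matrix.det_fin_two_of]
        simp only [isUnit_iff_ne_zero]
        intro h
        norm_num at h
      · have hmap : (!![0, -lam.re; -lam.re, 0] : Matrix (Fin 2) (Fin 2) ℝ).map Complex.ofReal
            = !![0, -lam; -lam, 0] := by
          ext i j
          fin_cases i <;> fin_cases j <;> simp [hlam]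
        rw [hmap]
        ext i j
        fin_cases i <;> fin_cases j <;>
          simp [Matrix.mul_apply, Fin.sum_univ_two, Matrix.diagonal_apply] <;> ring
      · intro l hl
        fin_cases l
        · intro h
          simp only [Matrix.cons_val_zero] at h
          have : lam = 0 := by
            have := congrArg Complex.re h
            have h2 := congrArg Complex.im h
            simp at this h2
            apply Complex.ext <;> simp [him] <;> linarith
          rw [this] at hre
          simp at hre
        · exact absurd rfl hl
  · -- non-real eigenvalue : 3×3 circulant
    set s : ℝ := Real.sqrt 3 with hsdef
    have hs : s ^ 2 = 3 := Real.sq_sqrt (by norm_num)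
    have hs0 : 0 < s := Real.sqrt_pos.mpr (by norm_num)
    set β : ℝ := 2 * lam.im / s with hβdef
    set t : ℝ := |lam.re| + |β| / 2 with htdef
    set c0 : ℝ := lam.re + t with hc0def
    set c1 : ℝ := t + β / 2 with hc1def
    set c2 : ℝ := t - β / 2 with hc2def
    have hc0 : 0 ≤ c0 := by
      rw [hc0def, htdef]
      have := neg_abs_le lam.re
      have := abs_nonneg β
      linarith
    have hc1 : 0 ≤ c1 := by
      rw [hc1def, htdef]
      have := neg_abs_le β
      have := abs_nonneg lam.re
      linarith
    have hc2 : 0 ≤ c2 := by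
      rw [hc2def, htdef]
      have := le_abs_self β
      have := abs_nonneg lam.re
      linarith
    set ω : ℂ := (-(1/2) : ℂ) + (s : ℂ)/2 * Complex.I with hωdef
    set ω' : ℂ := (-(1/2) : ℂ) - (s : ℂ)/2 * Complex.I with hω'def
    have hsC : ((s : ℂ))^2 = 3 := by
      rw [← Complex.ofReal_pow, hs]
      norm_num
    have hωω : ω * ω = ω' := by
      rw [hωdef, hω'def]
      linear_combination ((s:ℂ)^2/4) * Complex.I_sq - (1/4) * hsC
    have hω'ω' : ω' * ω' = ω := by
      rw [hωdef, hω'def]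
      linear_combination ((s:ℂ)^2/4) * Complex.I_sq - (1/4) * hsC
    have hωω' : ω * ω' = 1 := by
      rw [hωdef, hω'def]
      linear_combination (-(s:ℂ)^2/4) * Complex.I_sq + (1/4) * hsC
    have hA : c0 - c1/2 - c2/2 = lam.re := by
      rw [hc0def, hc1def, hc2def]
      ring
    have hB : (c1 - c2) * s / 2 = lam.im := by
      rw [hc1def, hc2def, hβdef]
      field_simp
      ring
    have h1 : ((c0 : ℂ)) - (c1:ℂ)/2 - (c2:ℂ)/2 = ((lam.re : ℝ) : ℂ) := by
      exact_mod_cast congrArg (Complex.ofReal) hA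
    have h2 : ((c1:ℂ) - (c2:ℂ)) * (s:ℂ) / 2 = ((lam.im : ℝ) : ℂ) := by
      exact_mod_cast congrArg (Complex.ofReal) hB
    have key1 : (c0 : ℂ) + (c1 : ℂ) * ω + (c2 : ℂ) * ω' = lam := by
      rw [hωdef, hω'def]
      linear_combination h1 + Complex.I * h2 + Complex.re_add_im lam
    have hconj : (⟨lam.re, -lam.im⟩ : ℂ) = ((lam.re : ℝ) : ℂ) - ((lam.im : ℝ) : ℂ) * Complex.I := by
      apply Complex.ext <;> simp
    have key2 : (c0 : ℂ) + (c1 : ℂ) * ω' + (c2 : ℂ) * ω = (⟨lam.re, -lam.im⟩ : ℂ) := by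
      rw [hωdef, hω'def, hconj]
      linear_combination h1 - Complex.I * h2
    refine JordanBlockAux.core lam d hd 3 (by norm_num)
      !![c0, c1, c2; c2, c0, c1; c1, c2, c0] ?_
      !![1, 1, 1; 1, ω, ω'; 1, ω', ω] ?_
      ![((c0 + c1 + c2 : ℝ) : ℂ), lam, (⟨lam.re, -lam.im⟩ : ℂ)] ?_ 1 rfl ?_
    · intro i j
      fin_cases i <;> fin_cases j <;> simpa using by assumption
    · have hdet : (!![1, 1, 1; 1, ω, ω'; 1, ω', ω] : Matrix (Fin 3) (Fin 3) ℂ).det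
          = 3 * ω' - 3 * ω := by
        rw [Matrix.det_fin_three]
        simp [Matrix.vecHead, Matrix.vecTail]
        ring
      rw [hdet, isUnit_iff_ne_zero]
      intro h
      have h9 : (s:ℂ) * Complex.I = 0 := by
        rw [hωdef, hω'def] at h
        linear_combination (-(1/3)) * h
      rcases mul_eq_zero.mp h9 with h10 | h10
      · rw [Complex.ofReal_eq_zero] at h10
        exact absurd h10 (ne_of_gt hs0)
      · exact Complex.I_ne_zero h10
    · have hmap : (!![c0, c1, c2; c2, c0, c1; c1, c2, c0] :
          Matrix (Fin 3) (Fin 3) ℝ).map Complex.ofReal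
          = !![(c0:ℂ), c1, c2; c2, c0, c1; c1, c2, c0] := by
        ext i j
        fin_cases i <;> fin_cases j <;> simp
      rw [hmap]
      ext i j
      fin_cases i <;> fin_cases j <;>
        simp [Matrix.mul_apply, Fin.sum_univ_three, Matrix.diagonal_apply]
      · exact key1
      · exact key2
      · ring
      · linear_combination ω * key1 - (c1:ℂ) * hωω - (c2:ℂ) * hωω'
      · linear_combination ω' * key2 - (c1:ℂ) * hω'ω' - (c2:ℂ) * hωω'
      · ring
      · linear_combination ω' * key1 - (c1:ℂ) * hωω' - (c2:ℂ) * hω'ω'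
      · linear_combination ω * key2 - (c1:ℂ) * hωω' - (c2:ℂ) * hωω
    · intro l hl
      fin_cases l
      · intro h
        have h2 := congrArg Complex.im h
        simp at h2
        exact him h2.symm
      · exact absurd rfl hl
      · intro h
        have h2 := congrArg Complex.im h
        simp at h2
        exact him (by linarith)
end

section
/- Let n ≥ 1 and let F : (Fin n → Bool) → (Fin n → Bool) be any boolean network (each coordinate Fᵢ is an arbitrary boolean function of the n variables). Then there exist m ≥ n and functions j₁, j₂ : Fin m → Fin m such that, defining the NOR-network G : (Fin m → Bool) → (Fin m → Bool) by G(X)(i) = ¬(X(j₁(i)) ∨ X(j₂(i))), the map sending X : Fin m → Bool to its restriction to the first n coordinates is a bijection from the set of fixed points of G onto the set of fixed points of F. -/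
namespace NorAux

inductive NF (n : ℕ) : Type
  | var : Fin n → NF n
  | nor : NF n → NF n → NF n

variable {n : ℕ}

def NF.eval (X : Fin n → Bool) : NF n → Bool
  | .var i => X i
  | .nor a b => !(NF.eval X a || NF.eval X b)

def notf (a : NF n) : NF n := a.nor a

@[simp] lemma eval_notf (a : NF n) (X : Fin n → Bool) :
    (notf a).eval X = !a.eval X := by
  simp [notf, NF.eval]

def orf (a b : NF n) : NF n := notf (a.nor b)

@[simp] lemma eval_orf (a b : NF n) (X : Fin n → Bool) :
    (orf a b).eval X = (a.eval X || b.eval X) := by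
  simp [orf, NF.eval]

def andf (a b : NF n) : NF n := (notf a).nor (notf b)

@[simp] lemma eval_andf (a b : NF n) (X : Fin n → Bool) :
    (andf a b).eval X = (a.eval X && b.eval X) := by
  cases h1 : a.eval X <;> cases h2 : b.eval X <;> simp [andf, NF.eval, h1, h2]

def ffml (h : 0 < n) : NF n := (NF.var ⟨0, h⟩).nor (notf (NF.var ⟨0, h⟩))

@[simp] lemma eval_ffml (h : 0 < n) (X : Fin n → Bool) : (ffml h).eval X = false := by
  cases hx : X ⟨0, h⟩ <;> simp [ffml, NF.eval, hx]

def ttml (h : 0 < n) : NF n := notf (ffml h)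

@[simp] lemma eval_ttml (h : 0 < n) (X : Fin n → Bool) : (ttml h).eval X = true := by
  simp [ttml]

def bigOr (h : 0 < n) (l : List (NF n)) : NF n := l.foldr orf (ffml h)

@[simp] lemma eval_bigOr (h : 0 < n) (l : List (NF n)) (X : Fin n → Bool) :
    (bigOr h l).eval X = l.any (fun a => a.eval X) := by
  induction l with
  | nil => simp [bigOr]
  | cons a l ih => simp [bigOr, List.foldr] at ih ⊢; simp [ih]

def bigAnd (h : 0 < n) (l : List (NF n)) : NF n := l.foldr andf (ttml h)

@[simp] lemma eval_bigAnd (h : 0 < n) (l : List (NF n)) (X : Fin n → Bool) :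
    (bigAnd h l).eval X = l.all (fun a => a.eval X) := by
  induction l with
  | nil => simp [bigAnd]
  | cons a l ih => simp [bigAnd, List.foldr] at ih ⊢; simp [ih]

def point (h : 0 < n) (a : Fin n → Bool) : NF n :=
  bigAnd h ((List.finRange n).map (fun i => if a i then NF.var i else notf (NF.var i)))

lemma eval_point (h : 0 < n) (a X : Fin n → Bool) :
    ((point h a).eval X = true) ↔ X = a := by
  simp only [point, eval_bigAnd, List.all_eq_true, List.mem_map, List.mem_finRange]
  constructor
  · intro hall
    funext i
    have := hall _ ⟨i, trivial, rfl⟩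
    by_cases hai : a i = true
    · simpa [hai, NF.eval] using this
    · simp only [Bool.not_eq_true] at hai
      simp [hai, NF.eval] at this
      simp [this, hai]
  · rintro rfl x ⟨i, -, rfl⟩
    by_cases hai : X i = true <;> simp [hai, NF.eval]

lemma exists_formula (h : 0 < n) (f : (Fin n → Bool) → Bool) :
    ∃ φ : NF n, ∀ X, φ.eval X = f X := by
  classical
  refine ⟨bigOr h (((Finset.univ.filter fun a => f a = true).toList).map (point h)), ?_⟩
  intro X
  rw [Bool.eq_iff_iff]
  simp only [eval_bigOr, List.any_eq_true, List.mem_map, Finset.mem_toList,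
    Finset.mem_filter, Finset.mem_univ, true_and]
  constructor
  · rintro ⟨x, ⟨a, hfa, rfl⟩, hpt⟩
    rw [eval_point] at hpt
    subst hpt; exact hfa
  · intro hf
    exact ⟨_, ⟨X, hf, rfl⟩, (eval_point h X X).mpr rfl⟩


variable {n : ℕ}

/-- A reference: either an input variable or an earlier gate. -/
abbrev Ref (n : ℕ) := Fin n ⊕ ℕ

def getVal (X : Fin n → Bool) (vs : List Bool) : Ref n → Bool
  | .inl i => X i
  | .inr p => vs.getD p false

def RefValid (k : ℕ) : Ref n → Prop
  | .inl _ => True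
  | .inr p => p < k

lemma RefValid.mono {k k' : ℕ} {r : Ref n} (h : RefValid k r) (hk : k ≤ k') :
    RefValid k' r := by
  cases r with
  | inl i => trivial
  | inr p => exact lt_of_lt_of_le h hk

lemma getVal_mono (X : Fin n → Bool) {vs vs' : List Bool} {r : Ref n}
    (h : RefValid vs.length r) (hpre : vs <+: vs') :
    getVal X vs' r = getVal X vs r := by
  cases r with
  | inl i => rfl
  | inr p =>
    obtain ⟨w, rfl⟩ := hpre
    simp only [getVal]
    rw [List.getD_append _ _ _ _ h]

def evalFrom (X : Fin n → Bool) (vs : List Bool) : List (Ref n × Ref n) → List Bool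
  | [] => vs
  | e :: L => evalFrom X (vs ++ [!(getVal X vs e.1 || getVal X vs e.2)]) L

@[simp] lemma evalFrom_length (X : Fin n → Bool) (L : List (Ref n × Ref n))
    (vs : List Bool) : (evalFrom X vs L).length = vs.length + L.length := by
  induction L generalizing vs with
  | nil => simp [evalFrom]
  | cons e L ih => simp [evalFrom, ih]; omega

lemma evalFrom_prefix (X : Fin n → Bool) (L : List (Ref n × Ref n))
    (vs : List Bool) : vs <+: evalFrom X vs L := by
  induction L generalizing vs with
  | nil => exact List.prefix_refl _
  | cons e L ih => exact List.IsPrefix.trans (List.prefix_append _ _) (ih _)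

lemma evalFrom_append (X : Fin n → Bool) (L M : List (Ref n × Ref n))
    (vs : List Bool) : evalFrom X vs (L ++ M) = evalFrom X (evalFrom X vs L) M := by
  induction L generalizing vs with
  | nil => simp [evalFrom]
  | cons e L ih => simp [evalFrom, ih]

def evalL (X : Fin n → Bool) (L : List (Ref n × Ref n)) : List Bool := evalFrom X [] L

lemma evalL_length (X : Fin n → Bool) (L : List (Ref n × Ref n)) :
    (evalL X L).length = L.length := by simp [evalL]

lemma evalL_prefix (X : Fin n → Bool) (L M : List (Ref n × Ref n)) :
    evalL X L <+: evalL X (L ++ M) := by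
  rw [evalL, evalL, evalFrom_append]; exact evalFrom_prefix _ _ _

/-- Well-formedness of a program starting at position `k`. -/
def WFfrom (k : ℕ) : List (Ref n × Ref n) → Prop
  | [] => True
  | e :: L => RefValid k e.1 ∧ RefValid k e.2 ∧ WFfrom (k + 1) L

lemma WFfrom_append (k : ℕ) (L M : List (Ref n × Ref n)) :
    WFfrom k (L ++ M) ↔ WFfrom k L ∧ WFfrom (k + L.length) M := by
  induction L generalizing k with
  | nil => simp [WFfrom]
  | cons e L ih =>
    have hk : k + (e :: L).length = (k + 1) + L.length := by simp; omega
    rw [List.cons_append, hk]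
    show (RefValid k e.1 ∧ RefValid k e.2 ∧ WFfrom (k+1) (L ++ M)) ↔
      (RefValid k e.1 ∧ RefValid k e.2 ∧ WFfrom (k+1) L) ∧ _
    rw [ih]
    tauto

/-- The recurrence for gate values. -/
lemma evalL_getD (X : Fin n → Bool) (L : List (Ref n × Ref n)) (hwf : WFfrom 0 L)
    (p : ℕ) (hp : p < L.length) :
    (evalL X L).getD p false =
      !(getVal X (evalL X L) (L.get ⟨p, hp⟩).1 || getVal X (evalL X L) (L.get ⟨p, hp⟩).2) := by
  have hLsplit : L = L.take p ++ L.get ⟨p, hp⟩ :: L.drop (p + 1) := by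
    conv_lhs => rw [← List.take_append_drop p L]
    congr 1
    rw [List.drop_eq_getElem_cons hp]
    simp [List.get_eq_getElem]
  set e := L.get ⟨p, hp⟩ with he
  have hlen : (L.take p).length = p := List.length_take_of_le hp.le
  have hwf' : RefValid p e.1 ∧ RefValid p e.2 := by
    rw [hLsplit, WFfrom_append] at hwf
    have h2 := hwf.2
    rw [hlen, Nat.zero_add] at h2
    exact ⟨h2.1, h2.2.1⟩
  set vs := evalL X (L.take p) with hvs
  have hvslen : vs.length = p := by rw [hvs, evalL_length, hlen]
  have hev : evalL X L = evalFrom X (vs ++ [!(getVal X vs e.1 || getVal X vs e.2)])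
      (L.drop (p + 1)) := by
    conv_lhs => rw [hLsplit]
    rw [evalL, evalFrom_append, evalFrom]
    rw [hvs, evalL]
  have hpre1 : vs ++ [!(getVal X vs e.1 || getVal X vs e.2)] <+: evalL X L := by
    rw [hev]; exact evalFrom_prefix _ _ _
  have hpre2 : vs <+: evalL X L :=
    List.IsPrefix.trans (List.prefix_append _ _) hpre1
  have hg1 : getVal X (evalL X L) e.1 = getVal X vs e.1 :=
    getVal_mono X (hvslen ▸ hwf'.1) hpre2
  have hg2 : getVal X (evalL X L) e.2 = getVal X vs e.2 :=
    getVal_mono X (hvslen ▸ hwf'.2) hpre2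
  rw [hg1, hg2]
  obtain ⟨w, hw⟩ := hpre1
  rw [← hw, List.getD_append _ _ _ _ (by simp [hvslen])]
  rw [List.getD_append_right _ _ _ _ (by omega)]
  simp [hvslen]


variable {n : ℕ}

def comp : NF n → List (Ref n × Ref n) → List (Ref n × Ref n) × Ref n
  | .var i, L => (L, .inl i)
  | .nor a b, L =>
      let P1 := comp a L
      let P2 := comp b P1.1
      (P2.1 ++ [(P1.2, P2.2)], .inr P2.1.length)

/-- Stability of a ref's value under extension of the program. -/
lemma getVal_evalL_ext (X : Fin n → Bool) (L M : List (Ref n × Ref n)) {r : Ref n}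
    (h : RefValid L.length r) :
    getVal X (evalL X (L ++ M)) r = getVal X (evalL X L) r :=
  getVal_mono X (by rwa [evalL_length]) (evalL_prefix X L M)

lemma comp_spec (φ : NF n) (L : List (Ref n × Ref n)) (hwf : WFfrom 0 L) :
    (∃ w, (comp φ L).1 = L ++ w) ∧ WFfrom 0 (comp φ L).1 ∧
    RefValid (comp φ L).1.length (comp φ L).2 ∧
    ∀ X, getVal X (evalL X (comp φ L).1) (comp φ L).2 = φ.eval X := by
  induction φ generalizing L hwf with
  | var i =>
    exact ⟨⟨[], by simp [comp]⟩, by simpa [comp] using hwf, trivial, fun X => rfl⟩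
  | nor a b iha ihb =>
    obtain ⟨⟨w1, hw1⟩, hwf1, hv1, he1⟩ := iha L hwf
    obtain ⟨⟨w2, hw2⟩, hwf2, hv2, he2⟩ := ihb (comp a L).1 hwf1
    set L1 := (comp a L).1
    set L2 := (comp b L1).1
    have hC : comp (NF.nor a b) L = (L2 ++ [((comp a L).2, (comp b L1).2)], .inr L2.length) := rfl
    rw [hC]
    have hlen12 : L1.length ≤ L2.length := by rw [hw2]; simp
    refine ⟨⟨w1 ++ w2 ++ [((comp a L).2, (comp b L1).2)], by rw [hw2, hw1]; simp⟩, ?_, ?_, ?_⟩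
    · rw [WFfrom_append]
      refine ⟨hwf2, ?_⟩
      rw [Nat.zero_add]
      exact ⟨(hv1.mono hlen12), hv2, trivial⟩
    · simp [RefValid]
    · intro X
      have hval : ∀ r : Ref n, RefValid L2.length r →
          getVal X (evalL X (L2 ++ [((comp a L).2, (comp b L1).2)])) r
            = getVal X (evalL X L2) r := fun r hr => getVal_evalL_ext X _ _ hr
      have hlast : getVal X (evalL X (L2 ++ [((comp a L).2, (comp b L1).2)]))
          (.inr L2.length : Ref n)
          = !(getVal X (evalL X L2) (comp a L).2 || getVal X (evalL X L2) (comp b L1).2) := by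
        show (evalL X _).getD L2.length false = _
        rw [evalL, evalFrom_append]
        have hlen : (evalL X L2).length = L2.length := evalL_length X L2
        show (evalFrom X (evalL X L2) _).getD L2.length false = _
        rw [evalFrom]
        rw [evalFrom]
        rw [List.getD_append_right _ _ _ _ (by omega)]
        simp [hlen, evalL]
      rw [hlast]
      have ha : getVal X (evalL X L2) (comp a L).2 = a.eval X := by
        rw [hw2, getVal_evalL_ext X L1 w2 hv1]
        exact he1 X
      rw [ha, he2 X]
      rfl

def compAll : List (NF n) → List (Ref n × Ref n) → List (Ref n × Ref n) × List (Ref n)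
  | [], L => (L, [])
  | φ :: rest, L =>
      let P1 := comp φ L
      let P2 := compAll rest P1.1
      (P2.1, P1.2 :: P2.2)

lemma compAll_spec (φs : List (NF n)) (L : List (Ref n × Ref n)) (hwf : WFfrom 0 L) :
    (∃ w, (compAll φs L).1 = L ++ w) ∧ WFfrom 0 (compAll φs L).1 ∧
    (compAll φs L).2.length = φs.length ∧
    ∀ k (hk : k < φs.length),
      RefValid (compAll φs L).1.length ((compAll φs L).2.getD k (.inr 0)) ∧
      ∀ X, getVal X (evalL X (compAll φs L).1) ((compAll φs L).2.getD k (.inr 0))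
        = (φs.get ⟨k, hk⟩).eval X := by
  induction φs generalizing L hwf with
  | nil =>
    exact ⟨⟨[], by simp [compAll]⟩, by simpa [compAll] using hwf,
      by simp [compAll], fun k hk => absurd hk (by simp)⟩
  | cons φ rest ih =>
    obtain ⟨⟨w1, hw1⟩, hwf1, hv1, he1⟩ := comp_spec φ L hwf
    obtain ⟨⟨w2, hw2⟩, hwf2, hlen2, hrest⟩ := ih (comp φ L).1 hwf1
    have hC : compAll (φ :: rest) L =
        ((compAll rest (comp φ L).1).1, (comp φ L).2 :: (compAll rest (comp φ L).1).2) := rfl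
    rw [hC]
    refine ⟨⟨w1 ++ w2, by rw [hw2, hw1]; simp⟩, hwf2, by simp [hlen2], ?_⟩
    rintro (_ | k) hk
    · simp only [List.getD_cons_zero]
      constructor
      · exact hv1.mono (by rw [hw2]; simp)
      · intro X
        rw [hw2, getVal_evalL_ext X _ _ hv1]
        exact he1 X
    · simp only [List.getD_cons_succ]
      exact hrest k (by simpa using hk)


variable {n : ℕ}

lemma WFfrom_get (L : List (Ref n × Ref n)) (hwf : WFfrom 0 L) (p : ℕ) (hp : p < L.length) :
    RefValid p (L.get ⟨p, hp⟩).1 ∧ RefValid p (L.get ⟨p, hp⟩).2 := by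
  have hLsplit : L = L.take p ++ L.get ⟨p, hp⟩ :: L.drop (p + 1) := by
    conv_lhs => rw [← List.take_append_drop p L]
    congr 1
    rw [List.drop_eq_getElem_cons hp]
    simp [List.get_eq_getElem]
  rw [hLsplit, WFfrom_append] at hwf
  have h2 := hwf.2
  rw [List.length_take_of_le hp.le, Nat.zero_add] at h2
  exact ⟨h2.1, h2.2.1⟩

/-- Map a reference to an index of the combined network. -/
def refFin (n N : ℕ) (h : 0 < n) (r : Ref n) : Fin (n + N) :=
  match r with
  | .inl i => ⟨i.1, by omega⟩
  | .inr q => if hq : q < N then ⟨n + q, by omega⟩ else ⟨0, by omega⟩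

lemma bridge (h : 0 < n) (L : List (Ref n × Ref n))
    (X : Fin (n + L.length) → Bool) (x : Fin n → Bool)
    (hx : ∀ i : Fin n, x i = X ⟨i.1, by omega⟩)
    (p : ℕ) (hpN : p ≤ L.length)
    (hgates : ∀ q, (hq : q < p) → X ⟨n + q, by omega⟩ = (evalL x L).getD q false)
    (r : Ref n) (hr : RefValid p r) :
    X (refFin n L.length h r) = getVal x (evalL x L) r := by
  cases r with
  | inl i =>
    rw [show refFin n L.length h (.inl i) = ⟨i.1, by omega⟩ from rfl]
    exact (hx i).symm
  | inr q =>
    have hq : q < L.length := lt_of_lt_of_le hr hpN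
    rw [show refFin n L.length h (.inr q) = ⟨n + q, by omega⟩ from by simp [refFin, hq]]
    exact hgates q hr

lemma gates_det (h : 0 < n) (L : List (Ref n × Ref n)) (hwf : WFfrom 0 L)
    (X : Fin (n + L.length) → Bool) (x : Fin n → Bool)
    (hx : ∀ i : Fin n, x i = X ⟨i.1, by omega⟩)
    (hfix : ∀ q (hq : q < L.length), X ⟨n + q, by omega⟩ =
      !(X (refFin n L.length h (L.get ⟨q, hq⟩).1) ||
        X (refFin n L.length h (L.get ⟨q, hq⟩).2))) :
    ∀ p (hp : p < L.length), X ⟨n + p, by omega⟩ = (evalL x L).getD p false := by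
  intro p
  induction p using Nat.strong_induction_on with
  | _ p ih =>
    intro hp
    rw [hfix p hp, evalL_getD x L hwf p hp]
    rw [bridge h L X x hx p hp.le (fun q hq => ih q hq (hq.trans hp)) _
          (WFfrom_get L hwf p hp).1,
        bridge h L X x hx p hp.le (fun q hq => ih q hq (hq.trans hp)) _
          (WFfrom_get L hwf p hp).2]


variable {n : ℕ}

/-- The wiring function of the combined NOR network. -/
def mkJ (n N : ℕ) (h : 0 < n) (L : List (Ref n × Ref n)) (rs : List (Ref n))
    (sel : Ref n × Ref n → Ref n) (i : Fin (n + N)) : Fin (n + N) :=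
  if hi : i.1 < n then refFin n N h (rs.getD i.1 (.inr 0))
  else refFin n N h (sel (L.getD (i.1 - n) (.inr 0, .inr 0)))

lemma mkJ_lt {N : ℕ} (h : 0 < n) (L : List (Ref n × Ref n)) (rs : List (Ref n))
    (sel : Ref n × Ref n → Ref n) (i : Fin (n + N)) (hi : i.1 < n) :
    mkJ n N h L rs sel i = refFin n N h (rs.getD i.1 (.inr 0)) := dif_pos hi

lemma mkJ_ge {N : ℕ} (h : 0 < n) (L : List (Ref n × Ref n)) (rs : List (Ref n))
    (sel : Ref n × Ref n → Ref n) (i : Fin (n + N)) (hi : ¬ i.1 < n) :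
    mkJ n N h L rs sel i = refFin n N h (sel (L.getD (i.1 - n) (.inr 0, .inr 0))) := dif_neg hi

end NorAux

open NorAux

/-- Every boolean network `F` on `n ≥ 1` variables is equivalent to a
NOR-network `G` on `m ≥ n` variables: each coordinate of `G` is the NOR of
two coordinates, and restriction to the first `n` coordinates is a bijection
from the fixed points of `G` onto the fixed points of `F`. -/
theorem boolean_network_equiv_nor_network
    (n : ℕ) (hn : 1 ≤ n)
    (F : (Fin n → Bool) → (Fin n → Bool)) :
    ∃ (m : ℕ) (hnm : n ≤ m) (j₁ j₂ : Fin m → Fin m),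
      Set.BijOn (fun X : Fin m → Bool => X ∘ Fin.castLE hnm)
        {X : Fin m → Bool |
          (fun Y : Fin m → Bool => fun i => !(Y (j₁ i) || Y (j₂ i))) X = X}
        {X : Fin n → Bool | F X = X} := by
  classical
  have h0 : 0 < n := hn
  choose g hg using fun i : Fin n => exists_formula h0 (fun x => F x i)
  set φs : List (NF n) := (List.finRange n).map (fun i => notf (g i)) with hφs
  obtain ⟨-, hwf, hrslen, hspec⟩ := compAll_spec φs [] trivial
  set L := (compAll φs ([] : List (Ref n × Ref n))).1 with hL
  set rs := (compAll φs ([] : List (Ref n × Ref n))).2 with hrs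
  set N := L.length with hN
  have hφlen : φs.length = n := by simp [hφs]
  -- value of the output references
  have hout : ∀ (i : Fin n) (x : Fin n → Bool),
      getVal x (evalL x L) (rs.getD i.1 (.inr 0)) = !(F x i) := by
    intro i x
    have hk : i.1 < φs.length := by rw [hφlen]; exact i.2
    rw [(hspec i.1 hk).2 x]
    have hget : φs.get ⟨i.1, hk⟩ = notf (g i) := by
      simp [hφs, List.get_eq_getElem]
    rw [hget, eval_notf, hg]
  have hvout : ∀ i : Fin n, RefValid N (rs.getD i.1 (.inr 0)) := by
    intro i
    exact (hspec i.1 (by rw [hφlen]; exact i.2)).1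
  set j1 := mkJ n N h0 L rs Prod.fst with hj1
  set j2 := mkJ n N h0 L rs Prod.snd with hj2
  -- rewriting the wiring at gate indices
  have hJgate : ∀ (sel : Ref n × Ref n → Ref n) (q : ℕ) (hq : q < N),
      mkJ n N h0 L rs sel ⟨n + q, by omega⟩ = refFin n N h0 (sel (L.get ⟨q, hq⟩)) := by
    intro sel q hq
    rw [mkJ_ge h0 L rs sel _ (by simp)]
    congr 1
    have h1 : (⟨n + q, by omega⟩ : Fin (n + N)).1 - n = q := by simp
    rw [h1, List.getD_eq_getElem _ _ hq, List.get_eq_getElem]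
  have hJin : ∀ (sel : Ref n × Ref n → Ref n) (i : Fin (n + N)) (hi : i.1 < n),
      mkJ n N h0 L rs sel i = refFin n N h0 (rs.getD i.1 (.inr 0)) :=
    fun sel i hi => mkJ_lt h0 L rs sel i hi
  -- gate values are determined for any fixed point
  have hdet : ∀ X : Fin (n + N) → Bool,
      (∀ i, (!(X (j1 i) || X (j2 i))) = X i) →
      ∀ p (hp : p < N), X ⟨n + p, by omega⟩ =
        (evalL (fun i : Fin n => X ⟨i.1, by omega⟩) L).getD p false := by
    intro X hXp
    refine gates_det h0 L hwf X _ (fun i => rfl) ?_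
    intro q hq
    have h1 := hXp ⟨n + q, by omega⟩
    rw [hj1, hj2, hJgate Prod.fst q hq, hJgate Prod.snd q hq] at h1
    exact h1.symm
  have hFx : ∀ X : Fin (n + N) → Bool,
      (∀ i, (!(X (j1 i) || X (j2 i))) = X i) →
      F (fun i : Fin n => X ⟨i.1, by omega⟩) = (fun i : Fin n => X ⟨i.1, by omega⟩) := by
    intro X hXp
    set x : Fin n → Bool := fun i : Fin n => X ⟨i.1, by omega⟩ with hxdef
    funext i
    have h1 := hXp ⟨i.1, by omega⟩
    rw [hj1, hj2, hJin Prod.fst _ i.2, hJin Prod.snd _ i.2, Bool.or_self] at h1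
    have h2 : X (refFin n N h0 (rs.getD i.1 (.inr 0)))
        = getVal x (evalL x L) (rs.getD i.1 (.inr 0)) :=
      bridge h0 L X x (fun j => rfl) N le_rfl (hdet X hXp) _ (hvout i)
    rw [h2, hout i x] at h1
    rw [Bool.not_not] at h1
    rw [h1]
  refine ⟨n + N, Nat.le_add_right n N, j1, j2, ?_, ?_, ?_⟩
  · -- MapsTo
    intro X hX
    have hXp : ∀ i, (!(X (j1 i) || X (j2 i))) = X i := fun i => congrFun hX i
    exact hFx X hXp
  · -- InjOn
    intro X hX X' hX' hres
    have hXp : ∀ i, (!(X (j1 i) || X (j2 i))) = X i := fun i => congrFun hX i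
    have hXp' : ∀ i, (!(X' (j1 i) || X' (j2 i))) = X' i := fun i => congrFun hX' i
    have hxr : (fun i : Fin n => X ⟨i.1, by omega⟩) =
        (fun i : Fin n => X' ⟨i.1, by omega⟩) := by
      funext j
      exact congrFun hres j
    funext i
    by_cases hi : i.1 < n
    · have := congrFun hres ⟨i.1, hi⟩
      simpa [Fin.castLE] using this
    · have hip : i = ⟨n + (i.1 - n), by have := i.2; omega⟩ := Fin.ext (show i.1 = n + (i.1 - n) by have := i.2; omega)
      have hq : i.1 - n < N := by have := i.2; omega
      rw [hip, hdet X hXp _ hq, hdet X' hXp' _ hq, hxr]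
  · -- SurjOn
    intro x hx
    have hxfix : F x = x := hx
    refine ⟨fun i : Fin (n + N) =>
      if hi : i.1 < n then x ⟨i.1, hi⟩ else (evalL x L).getD (i.1 - n) false, ?_, ?_⟩
    · -- it is a fixed point of the NOR network
      set X : Fin (n + N) → Bool := fun i =>
        if hi : i.1 < n then x ⟨i.1, hi⟩ else (evalL x L).getD (i.1 - n) false with hXdef
      have hxrX : ∀ i : Fin n, x i = X ⟨i.1, by omega⟩ := by
        intro i
        simp [hXdef, i.2, Fin.eta]
      have hgates : ∀ q, (hq : q < N) → X ⟨n + q, by omega⟩ = (evalL x L).getD q false := by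
        intro q hq
        simp [hXdef]
      show (fun Y : Fin (n + N) → Bool => fun i => !(Y (j1 i) || Y (j2 i))) X = X
      funext i
      show (!(X (j1 i) || X (j2 i))) = X i
      by_cases hi : i.1 < n
      · rw [hj1, hj2, hJin Prod.fst i hi, hJin Prod.snd i hi, Bool.or_self]
        rw [bridge h0 L X x hxrX N le_rfl hgates _ (hvout ⟨i.1, hi⟩)]
        rw [hout ⟨i.1, hi⟩ x]
        have : X i = x ⟨i.1, hi⟩ := by simp [hXdef, hi]
        rw [this, ← congrFun hxfix ⟨i.1, hi⟩]
        simp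
      · have hip : i = ⟨n + (i.1 - n), by have := i.2; omega⟩ := Fin.ext (show i.1 = n + (i.1 - n) by have := i.2; omega)
        have hq : i.1 - n < N := by have := i.2; omega
        rw [hip, hj1, hj2, hJgate Prod.fst _ hq, hJgate Prod.snd _ hq]
        have hv1 : RefValid N (L.get ⟨i.1 - n, hq⟩).1 :=
          ((WFfrom_get L hwf _ hq).1).mono hq.le
        have hv2 : RefValid N (L.get ⟨i.1 - n, hq⟩).2 :=
          ((WFfrom_get L hwf _ hq).2).mono hq.le
        rw [bridge h0 L X x hxrX N le_rfl hgates _ hv1,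
            bridge h0 L X x hxrX N le_rfl hgates _ hv2]
        rw [← evalL_getD x L hwf _ hq]
        exact (hgates _ hq).symm
    · -- its restriction is x
      funext i
      simp [Fin.castLE, i.2, Fin.eta]
end
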